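/- Let g : ℝ → ℂ be a continuous Wiener-space function with ĝ = −g. Then ∑_{k∈ℤ} (−1)^k g(√3·(k + 1/6)) = 0 and ∑_{k∈ℤ} (−1)^k g(√3·(k + 5/6)) = 0. -/

import Mathlib

/-!
Write `A d = ∑ₖ (-1)ᵏ g(√3 (k + d))`. Since `ĝ = -g`, Fourier inversion makes `g` even, and
reindexing `k ↦ -1 - k` gives `A (1 - d) = -A d`; hence `A (1/2) = 0` and `A (5/6) = -A (1/6)`.
Poisson summation for `t ↦ g(√3 t) e^{-πit}` at `x = 1/6` expresses `√3 e^{-πi/6} A (1/6)` through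
the samples `ĝ((n + 1/2)/√3) = -g((n + 1/2)/√3)`. Splitting `n` by its residue mod 3 (note
`3/√3 = √3`) turns that dual sum back into `A (1/6)`, `A (1/2)`, `A (5/6)`, and since
`e^{πi/6} (1 - e^{2πi/3}) = √3` the identity collapses to `A (1/6) = -A (1/6)`. The Wiener
condition supplies the absolute convergence that Poisson summation and the regrouping need.
-/

open MeasureTheory Complex Real FourierTransform

/-- The Zak transform `Z_λ f (x, γ) = √λ ∑_{k∈ℤ} f(λ(x+k)) e^{-2πikγ}`. -/
noncomputable def zak (lam : ℝ) (f : ℝ → ℂ) (x γ : ℝ) : ℂ :=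
  (Real.sqrt lam : ℂ) *
    ∑' k : ℤ, f (lam * (x + k)) * Complex.exp (-2 * Real.pi * Complex.I * k * γ)

/-- Membership in the Wiener space `W(ℝ)`:
`∑_{k∈ℤ} sup_{x∈[0,1]} |f(x+k)| < ∞`. -/
def InWiener (f : ℝ → ℂ) : Prop :=
  Summable (fun k : ℤ => ⨆ x : Set.Icc (0:ℝ) 1, ‖f ((x : ℝ) + k)‖)

namespace Real

variable {E : Type*} [NormedAddCommGroup E] [NormedSpace ℂ E]

theorem fourier_comp_mul_left (f : ℝ → E) {a : ℝ} (ha : a ≠ 0) (ξ : ℝ) :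
    𝓕 (fun t => f (a * t)) ξ = |a|⁻¹ • 𝓕 f (ξ / a) := by
  have harg (t : ℝ) : -2 * π * t * ξ = -2 * π * (a * t) * (ξ / a) := by field_simp
  simp only [fourier_real_eq_integral_exp_smul, harg]
  rw [Measure.integral_comp_mul_left (fun s => Complex.exp (↑(-2 * π * s * (ξ / a)) * I) • f s),
    abs_inv]

theorem fourier_exp_mul (f : ℝ → E) (γ ξ : ℝ) :
    𝓕 (fun t => Complex.exp (↑(-2 * π * t * γ) * I) • f t) ξ = 𝓕 f (ξ + γ) := by
  simp only [fourier_real_eq_integral_exp_smul, smul_smul, ← Complex.exp_add]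
  congr 1 with t
  push_cast
  ring_nf

end Real

theorem even_of_fourier_eq_neg {g : ℝ → ℂ} (hg : Continuous g) (hi : Integrable g)
    (heig : ∀ γ : ℝ, 𝓕 g γ = -g γ) (x : ℝ) : g (-x) = g x := by
  have h𝓕 : 𝓕 g = -g := funext heig
  have h𝓕𝓕 : 𝓕 (𝓕 g) = g := by
    ext w
    rw [h𝓕, Real.fourier_real_eq]
    simp only [Pi.neg_apply, smul_neg, integral_neg, ← Real.fourier_real_eq, heig, neg_neg]
  have hinv := hg.fourierInv_fourier_eq hi (by rw [h𝓕]; exact hi.neg)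
  rw [← congrFun hinv x, Real.fourierInv_eq_fourier_neg, h𝓕𝓕]

section Residues

variable {E : Type*} [NormedAddCommGroup E] (m : ℕ) [NeZero m] {h : ℤ → E}

theorem summable_norm_of_residues (hs : ∀ r : Fin m, Summable fun j : ℤ => ‖h (j * m + r)‖) :
    Summable fun n => ‖h n‖ := by
  let e : Fin m × ℤ ≃ ℤ := (Equiv.prodComm _ _).trans (Int.divModEquiv m).symm
  exact e.summable_iff.1 <| (summable_prod_of_nonneg fun _ => norm_nonneg _).2 ⟨hs, .of_finite⟩

theorem hasSum_sum_residues [CompleteSpace E]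
    (hs : ∀ r : Fin m, Summable fun j : ℤ => ‖h (j * m + r)‖) :
    HasSum h (∑ r : Fin m, ∑' j : ℤ, h (j * m + r)) := by
  let e : Fin m × ℤ ≃ ℤ := (Equiv.prodComm _ _).trans (Int.divModEquiv m).symm
  have hsum : Summable (h ∘ e) := e.summable_iff.2 (summable_norm_of_residues m hs).of_norm
  rw [← e.hasSum_iff]
  convert hsum.hasSum using 1
  rw [hsum.tsum_prod' fun r => (hs r).of_norm, tsum_fintype]
  rfl

end Residues

noncomputable def wienerSup (g : ℝ → ℂ) (k : ℤ) : ℝ := ⨆ x : Set.Icc (0:ℝ) 1, ‖g (x + k)‖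

section Wiener

open Finset Function

variable {f g : ℝ → ℂ}

lemma wienerSup_nonneg (g : ℝ → ℂ) (k : ℤ) : 0 ≤ wienerSup g k :=
  Real.iSup_nonneg fun _ => norm_nonneg _

lemma InWiener.summable_wienerSup (hW : InWiener g) : Summable (wienerSup g) := hW

lemma Continuous.norm_le_wienerSup (hg : Continuous g) (y : ℝ) : ‖g y‖ ≤ wienerSup g ⌊y⌋ := by
  have hbdd : BddAbove (Set.range fun x : Set.Icc (0:ℝ) 1 => ‖g (x + ⌊y⌋)‖) :=
    (isCompact_Icc.image (f := fun x => ‖g (x + ⌊y⌋)‖) (by fun_prop)).bddAbove.mono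
      (by rintro _ ⟨x, rfl⟩; exact ⟨x, x.2, rfl⟩)
  calc ‖g y‖ = ‖g (Int.fract y + ⌊y⌋)‖ := by rw [Int.fract_add_floor]
    _ ≤ wienerSup g ⌊y⌋ :=
      le_ciSup hbdd ⟨Int.fract y, Int.fract_nonneg y, (Int.fract_lt_one y).le⟩

lemma Continuous.norm_le_sum_wienerSup (hg : Continuous g) {a y : ℝ} {N : ℕ}
    (hy : y ∈ Set.Icc a (a + N)) : ‖g y‖ ≤ ∑ i ∈ range (N + 1), wienerSup g (⌊a⌋ + i) := by
  have hlo : ⌊a⌋ ≤ ⌊y⌋ := Int.floor_le_floor hy.1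
  have hhi : ⌊y⌋ ≤ ⌊a⌋ + N := (Int.floor_le_floor hy.2).trans_eq (Int.floor_add_natCast a N)
  have hmem : (⌊y⌋ - ⌊a⌋).toNat ∈ range (N + 1) := by rw [mem_range]; omega
  calc ‖g y‖ ≤ wienerSup g ⌊y⌋ := hg.norm_le_wienerSup y
    _ = wienerSup g (⌊a⌋ + (⌊y⌋ - ⌊a⌋).toNat) := by congr 1; omega
    _ ≤ _ := single_le_sum (f := fun i : ℕ => wienerSup g (⌊a⌋ + i))
        (fun i _ => wienerSup_nonneg g _) hmem

lemma InWiener.summable_sum_wienerSup (hW : InWiener g) (N : ℕ) {φ : ℤ → ℤ}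
    (hφ : Injective φ) : Summable fun n => ∑ i ∈ range (N + 1), wienerSup g (φ n + i) :=
  summable_sum fun _ _ => hW.summable_wienerSup.comp_injective ((add_left_injective _).comp hφ)

lemma InWiener.of_norm_le_comp_mul_left (hg : Continuous g) (hW : InWiener g) {a : ℝ}
    (ha : 1 ≤ a) (hf : ∀ t, ‖f t‖ ≤ ‖g (a * t)‖) : InWiener f := by
  have hmono : StrictMono fun k : ℤ => ⌊a * k⌋ := strictMono_int_of_lt_succ fun k =>
    calc ⌊a * k⌋ < ⌊a * k + 1⌋ := by rw [Int.floor_add_one]; omega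
      _ ≤ ⌊a * ↑(k + 1)⌋ := Int.floor_le_floor (by push_cast; linarith)
  refine Summable.of_nonneg_of_le (wienerSup_nonneg f) (fun k => ciSup_le fun x => ?_)
    (hW.summable_sum_wienerSup ⌈a⌉₊ hmono.injective)
  refine (hf _).trans (hg.norm_le_sum_wienerSup ⟨?_, ?_⟩)
  · nlinarith [x.2.1]
  · nlinarith [x.2.1, x.2.2, Nat.le_ceil a]

lemma InWiener.summable_norm_comp_add (hg : Continuous g) (hW : InWiener g) (c : ℝ) :
    Summable fun n : ℤ => ‖g (n + c)‖ :=
  Summable.of_nonneg_of_le (fun _ => norm_nonneg _)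
    (fun n => (hg.norm_le_wienerSup _).trans_eq (by rw [Int.floor_intCast_add]; rfl))
    (hW.summable_wienerSup.comp_injective (add_left_injective ⌊c⌋))

lemma InWiener.summable_norm_restrict {f : C(ℝ, ℂ)} (hW : InWiener f)
    (K : TopologicalSpace.Compacts ℝ) :
    Summable fun n : ℤ => ‖(f.comp (ContinuousMap.addRight n)).restrict K‖ := by
  obtain ⟨r, hr⟩ := K.isCompact.isBounded.subset_closedBall 0
  obtain ⟨R, hR⟩ := exists_nat_ge r
  refine Summable.of_nonneg_of_le (fun _ => norm_nonneg _) (fun n => ?_)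
    (hW.summable_sum_wienerSup (2 * R) (sub_left_injective (b := (R : ℤ))))
  refine (ContinuousMap.norm_le _ (sum_nonneg fun i _ => wienerSup_nonneg _ _)).2 fun t => ?_
  have ht := hr t.2
  rw [Real.closedBall_eq_Icc] at ht
  simpa only [Int.floor_intCast, ContinuousMap.restrict_apply, ContinuousMap.comp_apply,
    ContinuousMap.coe_addRight] using f.continuous.norm_le_sum_wienerSup
    (a := ((n - R : ℤ) : ℝ)) (y := t + n) (N := 2 * R)
    ⟨by push_cast; linarith [ht.1], by push_cast; linarith [ht.2]⟩

lemma InWiener.integrable (hg : Continuous g) (hW : InWiener g) : Integrable g :=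
  Real.integrable_of_summable_norm_Icc (f := ⟨g, hg⟩) <| by
    simp only [ContinuousMap.norm_eq_iSup_norm]
    exact hW

theorem InWiener.tsum_comp_mul_eq_tsum_fourier (hg : Continuous g) (hW : InWiener g)
    {a : ℝ} (ha : 1 ≤ a) (γ x : ℝ) (hsum : Summable fun n : ℤ => 𝓕 g ((n + γ) / a)) :
    ∑' n : ℤ, g (a * (x + n)) * Complex.exp (-2 * π * I * n * γ) =
      (a : ℂ)⁻¹ * Complex.exp (2 * π * I * x * γ) *
        ∑' n : ℤ, 𝓕 g ((n + γ) / a) * Complex.exp (2 * π * I * n * x) := by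
  let f : C(ℝ, ℂ) := ⟨fun t => Complex.exp (↑(-2 * π * t * γ) * I) • g (a * t), by fun_prop⟩
  have hfW : InWiener f := hW.of_norm_le_comp_mul_left hg ha fun t => by
    simp only [f, ContinuousMap.coe_mk, norm_smul, Complex.norm_exp_ofReal_mul_I, one_mul, le_rfl]
  have h𝓕f (ξ : ℝ) : 𝓕 ⇑f ξ = (a : ℂ)⁻¹ * 𝓕 g ((ξ + γ) / a) := by
    change 𝓕 (fun t => Complex.exp (↑(-2 * π * t * γ) * I) • (fun t => g (a * t)) t) ξ = _
    rw [Real.fourier_exp_mul, Real.fourier_comp_mul_left _ (by positivity),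
      abs_of_pos (by positivity), Complex.real_smul, Complex.ofReal_inv]
  have hpoisson := Real.tsum_eq_tsum_fourier hfW.summable_norm_restrict
    (by simpa only [h𝓕f] using hsum.mul_left _) x
  have hlhs (n : ℤ) : f (x + n) = Complex.exp (-2 * π * I * x * γ) *
      (g (a * (x + n)) * Complex.exp (-2 * π * I * n * γ)) := by
    have hexp : Complex.exp (↑(-2 * π * (x + n) * γ) * I) =
        Complex.exp (-2 * π * I * x * γ) * Complex.exp (-2 * π * I * n * γ) := by
      rw [← Complex.exp_add]
      push_cast
      ring_nf
    simp only [f, ContinuousMap.coe_mk, smul_eq_mul, hexp]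
    ring
  have hrhs (n : ℤ) : 𝓕 ⇑f n * fourier n (x : UnitAddCircle) =
      (a : ℂ)⁻¹ * (𝓕 g ((n + γ) / a) * Complex.exp (2 * π * I * n * x)) := by
    rw [h𝓕f, fourier_coe_apply, Complex.ofReal_one, div_one, mul_assoc]
  simp only [hlhs, hrhs, tsum_mul_left] at hpoisson
  calc _ = Complex.exp (2 * π * I * x * γ) * (Complex.exp (-2 * π * I * x * γ) *
        ∑' n : ℤ, g (a * (x + n)) * Complex.exp (-2 * π * I * n * γ)) := by
        rw [← mul_assoc, ← Complex.exp_add,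
          show 2 * π * I * x * γ + -2 * π * I * x * γ = 0 by ring, Complex.exp_zero, one_mul]
    _ = _ := by rw [hpoisson]; ring

end Wiener

noncomputable def alternatingSum (g : ℝ → ℂ) (a d : ℝ) : ℂ :=
  ∑' k : ℤ, (-1 : ℂ) ^ k * g (a * (k + d))

theorem alternatingSum_one_sub_of_even {g : ℝ → ℂ} (heven : ∀ x, g (-x) = g x) (a d : ℝ) :
    alternatingSum g a (1 - d) = -alternatingSum g a d := by
  rw [alternatingSum, alternatingSum, ← (Equiv.subLeft (-1 : ℤ)).tsum_eq, ← tsum_neg]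
  congr 1 with k
  have hsign : (-1 : ℂ) ^ (-1 - k) = -(-1) ^ k := by
    rcases Int.even_or_odd k with hk | hk
    · rw [hk.neg_one_zpow, Odd.neg_one_zpow (by obtain ⟨m, rfl⟩ := hk; exact ⟨-m - 1, by ring⟩)]
    · rw [hk.neg_one_zpow, Even.neg_one_zpow (by obtain ⟨m, rfl⟩ := hk; exact ⟨-m - 1, by ring⟩),
        neg_neg]
  rw [Equiv.subLeft_apply, hsign, ← heven]
  push_cast
  ring_nf

section SqrtThree

variable {g : ℝ → ℂ}

lemma div_sqrt_three_eq (j r : ℤ) :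
    (((j * 3 + r : ℤ) : ℝ) + 1 / 2) / √3 = √3 * (j + (2 * r + 1) / 6) := by
  have h3 : √3 * √3 = 3 := Real.mul_self_sqrt (by norm_num)
  rw [div_eq_iff (by positivity)]
  push_cast
  linear_combination (-(j : ℝ) - (2 * r + 1) / 6) * h3

lemma exp_two_pi_mul_I_div_six (j r : ℤ) :
    Complex.exp (2 * π * I * ((j * 3 + r : ℤ) : ℂ) * ((1 / 6 : ℝ) : ℂ)) =
      (-1) ^ j * Complex.exp (π * I * r / 3) := by
  rw [← Complex.exp_pi_mul_I, ← Complex.exp_int_mul, ← Complex.exp_add]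
  push_cast
  ring_nf

lemma exp_pi_div_six_mul_one_sub_exp :
    Complex.exp (π * I / 6) * (1 - Complex.exp (2 * π * I / 3)) = √3 := by
  have hexp (θ : ℝ) : Complex.exp (θ * I) = Real.cos θ + Real.sin θ * I := by
    rw [Complex.exp_mul_I, ← Complex.ofReal_cos, ← Complex.ofReal_sin]
  rw [mul_sub, mul_one, ← Complex.exp_add,
    show π * I / 6 = ((π / 6 : ℝ) : ℂ) * I by push_cast; ring,
    show ((π / 6 : ℝ) : ℂ) * I + 2 * π * I / 3 = ((π - π / 6 : ℝ) : ℂ) * I by push_cast; ring,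
    hexp, hexp, Real.cos_pi_sub, Real.sin_pi_sub, Real.cos_pi_div_six, Real.sin_pi_div_six]
  push_cast
  ring

lemma InWiener.summable_norm_slice_div_sqrt_three (hg : Continuous g) (hW : InWiener g)
    (r : ℤ) : Summable fun j : ℤ => ‖g ((((j * 3 + r : ℤ) : ℝ) + 1 / 2) / √3)‖ := by
  simp_rw [div_sqrt_three_eq]
  exact (hW.of_norm_le_comp_mul_left hg (Real.one_le_sqrt.2 (by norm_num)) fun _ => le_rfl)
    |>.summable_norm_comp_add (by fun_prop) _

lemma InWiener.summable_norm_div_sqrt_three (hg : Continuous g) (hW : InWiener g) :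
    Summable fun n : ℤ => ‖g ((n + 1 / 2) / √3)‖ :=
  summable_norm_of_residues 3 fun r => by
    simpa only [Nat.cast_ofNat] using hW.summable_norm_slice_div_sqrt_three hg r

theorem InWiener.hasSum_div_sqrt_three (hg : Continuous g) (hW : InWiener g) :
    HasSum (fun n : ℤ => g ((n + 1 / 2) / √3) * Complex.exp (2 * π * I * n * ((1 / 6 : ℝ) : ℂ)))
      (alternatingSum g √3 (1 / 6) + Complex.exp (π * I / 3) * alternatingSum g √3 (1 / 2) +
        Complex.exp (2 * π * I / 3) * alternatingSum g √3 (5 / 6)) := by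
  set h : ℤ → ℂ := fun n => g ((n + 1 / 2) / √3) * Complex.exp (2 * π * I * n * ((1 / 6 : ℝ) : ℂ))
  have hnorm (n : ℤ) : ‖h n‖ = ‖g ((n + 1 / 2) / √3)‖ := by
    simp [h, Complex.norm_exp]
  have hslice (r : Fin 3) (j : ℤ) : h (j * 3 + r) =
      Complex.exp (π * I * (r : ℤ) / 3) * ((-1) ^ j * g (√3 * (j + (2 * (r : ℤ) + 1) / 6))) := by
    simp only [h]
    rw [div_sqrt_three_eq, exp_two_pi_mul_I_div_six]
    ring
  have hsum := hasSum_sum_residues 3 (h := h) fun r => by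
    simpa only [hnorm, Nat.cast_ofNat] using hW.summable_norm_slice_div_sqrt_three hg r
  simp only [Nat.cast_ofNat, hslice, tsum_mul_left, Fin.sum_univ_three] at hsum
  norm_num at hsum
  rwa [show 2 * π * I / 3 = π * I * 2 / 3 by ring]

theorem alternatingSum_sqrt_three_eq (hg : Continuous g) (hW : InWiener g)
    (heig : ∀ γ : ℝ, 𝓕 g γ = -g γ) :
    alternatingSum g √3 (1 / 6) = -((√3 : ℂ)⁻¹ * Complex.exp (π * I / 6)) *
      (alternatingSum g √3 (1 / 6) + Complex.exp (π * I / 3) * alternatingSum g √3 (1 / 2) +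
        Complex.exp (2 * π * I / 3) * alternatingSum g √3 (5 / 6)) := by
  have hsum : Summable fun n : ℤ => 𝓕 g ((n + 1 / 2) / √3) := by
    simpa only [heig] using (hW.summable_norm_div_sqrt_three hg).of_norm.neg
  have hpoisson := hW.tsum_comp_mul_eq_tsum_fourier hg (Real.one_le_sqrt.2 (by norm_num))
    (1 / 2) (1 / 6) hsum
  have hsign (n : ℤ) : Complex.exp (-2 * π * I * n * ((1 / 2 : ℝ) : ℂ)) = (-1) ^ n := by
    have hneg : Complex.exp (-(π * I)) = -1 := by
      rw [Complex.exp_neg, Complex.exp_pi_mul_I, inv_neg, inv_one]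
    rw [← hneg, ← Complex.exp_int_mul]
    push_cast
    ring_nf
  simp only [hsign] at hpoisson
  simp only [heig, neg_mul, tsum_neg, (hW.hasSum_div_sqrt_three hg).tsum_eq] at hpoisson
  convert hpoisson using 1
  · exact tsum_congr fun n => by rw [add_comm (n : ℝ), mul_comm]
  · rw [show 2 * π * I * ((1 / 6 : ℝ) : ℂ) * ((1 / 2 : ℝ) : ℂ) = π * I / 6 by push_cast; ring]
    ring

end SqrtThree

theorem sum_eigen_neg_one_sqrt_three (g : ℝ → ℂ) (hg : Continuous g) (hW : InWiener g)
    (heig : ∀ γ : ℝ, 𝓕 g γ = -g γ) :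
    (∑' k : ℤ, (-1 : ℂ) ^ k * g (Real.sqrt 3 * ((k : ℝ) + 1/6)) = 0) ∧
    (∑' k : ℤ, (-1 : ℂ) ^ k * g (Real.sqrt 3 * ((k : ℝ) + 5/6)) = 0) := by
  have heven := even_of_fourier_eq_neg hg (hW.integrable hg) heig
  have h12 : alternatingSum g √3 (1 / 2) = 0 := by
    have := alternatingSum_one_sub_of_even heven √3 (1 / 2)
    norm_num at this
    linear_combination this / 2
  have h56 : alternatingSum g √3 (5 / 6) = -alternatingSum g √3 (1 / 6) := by
    have := alternatingSum_one_sub_of_even heven √3 (5 / 6)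
    norm_num at this
    linear_combination this
  have h16 : alternatingSum g √3 (1 / 6) = 0 := by
    have hinv : (√3 : ℂ)⁻¹ * √3 = 1 :=
      inv_mul_cancel₀ (by exact_mod_cast (Real.sqrt_pos.2 (by norm_num : (0:ℝ) < 3)).ne')
    have h := alternatingSum_sqrt_three_eq hg hW heig
    rw [h12, h56] at h
    linear_combination (1 / 2) * h - (1 / 2) * (√3 : ℂ)⁻¹ * alternatingSum g √3 (1 / 6) *
      exp_pi_div_six_mul_one_sub_exp - (1 / 2) * alternatingSum g √3 (1 / 6) * hinv
  refine ⟨h16, ?_⟩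
  show alternatingSum g √3 (5 / 6) = 0
  rw [h56, h16, neg_zero]
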